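/- arXiv:2211.16962 — 7 statements merged into one kernel-verified Lean document; each statement's English description precedes it below -/
import Mathlib

section
/- Let p ≥ 2. If d is a positive integer with d ≥ P_0^{i-1} := 1 + p + ⋯ + p^{i-1}, then there exists a partition d = d_1 + ⋯ + d_i by positive integers with p·d_{r+1} ≤ d_r for all r; in particular τ_p(d) ≥ i. -/
/-- `Ppow p j i = p^j + p^(j+1) + ⋯ + p^i`, the sum of consecutive `p`-powers. -/
def Ppow (p j i : ℕ) : ℕ := ∑ r ∈ Finset.Icc j i, p ^ r

/-- A list is an admissible partition for `p` if it is nonempty, consists of positive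
integers, and each term is at least `p` times the next. -/
def Admissible (p : ℕ) (l : List ℕ) : Prop :=
  l ≠ [] ∧ (∀ x ∈ l, 0 < x) ∧ List.Chain' (fun a b => p * b ≤ a) l

/-- The quantity `s + min {v_p(d₁), …, v_p(d_s)}` attached to a partition. -/
noncomputable def partVal (p : ℕ) (l : List ℕ) : ℕ :=
  l.length + sInf {v | ∃ x ∈ l, padicValNat p x = v}

/-- `tau p d` is the maximum of `partVal p l` over admissible partitions `l` of `d`. -/
noncomputable def tau (p d : ℕ) : ℕ :=
  sSup {m | ∃ l : List ℕ, Admissible p l ∧ l.sum = d ∧ m = partVal p l}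

def pows (p : ℕ) : ℕ → List ℕ
  | 0 => []
  | n+1 => p^n :: pows p n

lemma pows_length (p n : ℕ) : (pows p n).length = n := by
  induction n with
  | zero => rfl
  | succ n ih => simp [pows, ih]

lemma pows_sum (p n : ℕ) : (pows p n).sum = ∑ r ∈ Finset.range n, p ^ r := by
  induction n with
  | zero => rfl
  | succ n ih => simp [pows, ih, Finset.sum_range_succ]; ring

lemma pows_chain (p n : ℕ) : List.Chain' (fun a b => p * b ≤ a) (pows p n) := by
  induction n with
  | zero => simp [pows, List.Chain']
  | succ n ih =>
    cases n with
    | zero => simp [pows, List.Chain']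
    | succ m =>
      refine List.IsChain.cons_cons ?_ ih
      simp [pow_succ, Nat.mul_comm]
  
lemma pows_pos (p n : ℕ) (hp : 1 ≤ p) : ∀ x ∈ pows p n, 0 < x := by
  induction n with
  | zero => simp [pows]
  | succ n ih =>
    intro x hx
    rcases List.mem_cons.mp hx with rfl | h
    · exact pow_pos hp n
    · exact ih x h

lemma length_le_sum (l : List ℕ) (h : ∀ x ∈ l, 0 < x) : l.length ≤ l.sum := by
  induction l with
  | nil => simp
  | cons a t ih =>
    simp only [List.length_cons, List.sum_cons]
    have ha : 1 ≤ a := h a (by simp)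
    have := ih (fun x hx => h x (by simp [hx]))
    omega

theorem stmt_3 (p i d : ℕ) (hp : 2 ≤ p) (hi : 1 ≤ i) (hd : 0 < d)
    (hge : Ppow p 0 (i - 1) ≤ d) :
    (∃ l : List ℕ, Admissible p l ∧ l.sum = d ∧ l.length = i) ∧ i ≤ tau p d := by
  set S := (pows p (i-1)).sum with hS
  have hsum : S = ∑ r ∈ Finset.range (i-1), p ^ r := pows_sum p (i-1)
  have hPp : Ppow p 0 (i-1) = ∑ r ∈ Finset.range i, p ^ r := by
    unfold Ppow
    congr 1
    ext x; simp; omega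
  have hsplit : ∑ r ∈ Finset.range i, p ^ r = S + p ^ (i-1) := by
    have hi' : (i-1)+1 = i := by omega
    conv_lhs => rw [← hi']
    rw [Finset.sum_range_succ, hsum]
  have hSd : S + p ^ (i-1) ≤ d := by rw [← hsplit, ← hPp]; exact hge
  have hhead : p ^ (i-1) ≤ d - S := by omega
  set l : List ℕ := (d - S) :: pows p (i-1) with hl
  have hadm : Admissible p l := by
    refine ⟨by simp [hl], ?_, ?_⟩
    · intro x hx
      rw [hl] at hx
      rcases List.mem_cons.mp hx with rfl | h
      · have : 0 < p ^ (i-1) := pow_pos (by omega) _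
        omega
      · exact pows_pos p (i-1) (by omega) x h
    · cases hcase : i - 1 with
      | zero => simp [hl, hcase, pows, List.Chain']
      | succ m =>
        rw [hl, hcase]
        show List.Chain' (fun a b => p * b ≤ a) ((d - S) :: p ^ m :: pows p m)
        refine List.IsChain.cons_cons ?_ (pows_chain p (m+1))
        show p * p ^ m ≤ d - S
        calc p * p ^ m = p ^ (m+1) := by ring
        _ ≤ d - S := by rw [← hcase]; exact hhead
  have hlsum : l.sum = d := by
    simp only [hl, List.sum_cons]
    omega
  have hllen : l.length = i := by
    simp [hl, pows_length]; omega
  refine ⟨⟨l, hadm, hlsum, hllen⟩, ?_⟩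
  -- tau bound
  have hmem : partVal p l ∈ {m | ∃ l : List ℕ, Admissible p l ∧ l.sum = d ∧ m = partVal p l} :=
    ⟨l, hadm, hlsum, rfl⟩
  have hbdd : BddAbove {m | ∃ l : List ℕ, Admissible p l ∧ l.sum = d ∧ m = partVal p l} := by
    refine ⟨2 * d, ?_⟩
    rintro m ⟨l', ⟨hne, hpos, _⟩, hsum', rfl⟩
    match l', hne, hpos, hsum' with
    | x :: t, hne, hpos, hsum' => ?_
    have hx : 0 < x := hpos x (by simp)
    have hlen : (x :: t).length ≤ d := by
      rw [← hsum']; exact length_le_sum _ hpos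
    have hv : padicValNat p x ≤ x := by
      have h1 : p ^ padicValNat p x ∣ x := pow_padicValNat_dvd
      have h2 : p ^ padicValNat p x ≤ x := Nat.le_of_dvd hx h1
      have h3 : padicValNat p x < p ^ padicValNat p x :=
        Nat.lt_pow_self (by omega)
      omega
    have hxd : x ≤ d := by
      rw [← hsum']; simp [List.sum_cons]
    have hinf : sInf {v | ∃ y ∈ (x :: t), padicValNat p y = v} ≤ padicValNat p x :=
      Nat.sInf_le ⟨x, by simp, rfl⟩
    unfold partVal
    omega
  have : i ≤ partVal p l := by
    unfold partVal; rw [hllen]; omega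
  exact le_trans this (le_csSup hbdd hmem)
end

section
/- Let p ≥ 2 be a natural number and let i ≥ 1. For any partition d = d_1 + ⋯ + d_s of a positive integer d ≤ P_0^i := 1 + p + ⋯ + p^i by positive integers with p·d_{r+1} ≤ d_r for all r, if the tuple (d_1, …, d_s) is not equal to (p^i, p^{i-1}, …, p^{i+1-s}), then s + min{v_p(d_1), …, v_p(d_s)} ≤ i. -/
theorem stmt_4 (p i d : ℕ) (hp : 2 ≤ p) (hi : 1 ≤ i) (hd : 0 < d)
    (hle : d ≤ Ppow p 0 i) (l : List ℕ) (hl : Admissible p l) (hsum : l.sum = d)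
    (hne : l ≠ (List.range l.length).map fun r => p ^ (i - r)) :
    l.length + sInf {v | ∃ x ∈ l, padicValNat p x = v} ≤ i := by
  by_contra hcon
  push_neg at hcon
  set s := l.length with hs
  set m := sInf {v | ∃ x ∈ l, padicValNat p x = v} with hm
  obtain ⟨hlne, hpos, hchain⟩ := hl
  have hs1 : 1 ≤ s := List.length_pos_iff.2 hlne
  set f : ℕ → ℕ := fun k => l.getD k 0 with hf
  have hfget : ∀ k (hk : k < s), f k = l.get ⟨k, hk⟩ := fun k hk => by
    simp only [hf, List.get_eq_getElem]
    exact List.getD_eq_getElem l 0 hk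
  have hmem : ∀ k, k < s → f k ∈ l := by
    intro k hk; rw [hfget k hk]; exact l.get_mem _
  have hfpos : ∀ k, k < s → 0 < f k := fun k hk => hpos _ (hmem k hk)
  have hdvd : ∀ k, k < s → p ^ m ∣ f k := by
    intro k hk
    have h1 : m ≤ padicValNat p (f k) := Nat.sInf_le ⟨f k, hmem k hk, rfl⟩
    exact (pow_dvd_pow p h1).trans pow_padicValNat_dvd
  simp only [List.Chain', List.isChain_iff_getElem] at hchain
  have key : ∀ j k, j ≤ k → ∀ hk : k < s, p ^ (k - j) * f k ≤ f j := by
    intro j k hjk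
    induction k, hjk using Nat.le_induction with
    | base => intro hk; simp
    | succ k hk ih =>
      intro hk1
      have hkl : k < s := by omega
      have hstep : p * f (k + 1) ≤ f k := by
        rw [hfget _ hk1, hfget _ hkl]
        exact hchain k (by omega)
      calc p ^ (k + 1 - j) * f (k + 1) = p ^ (k - j) * (p * f (k + 1)) := by
            rw [← mul_assoc, ← pow_succ]; congr 2; omega
        _ ≤ p ^ (k - j) * f k := Nat.mul_le_mul_left _ hstep
        _ ≤ f j := ih hkl
  have hfm : ∀ k, k < s → p ^ (s - 1 - k + m) ≤ f k := by
    intro k hk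
    have h1 := key k (s - 1) (by omega) (by omega)
    have h2 : p ^ m ≤ f (s - 1) := Nat.le_of_dvd (hfpos _ (by omega)) (hdvd _ (by omega))
    calc p ^ (s - 1 - k + m) = p ^ (s - 1 - k) * p ^ m := pow_add p _ _
      _ ≤ p ^ (s - 1 - k) * f (s - 1) := Nat.mul_le_mul_left _ h2
      _ ≤ f k := h1
  have hd0 : f 0 ≤ d := by
    rw [← hsum]
    exact List.single_le_sum (fun x _ => Nat.zero_le x) _ (hmem 0 (by omega))
  have hPpow : Ppow p 0 i = ∑ r ∈ Finset.range (i + 1), p ^ r := by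
    rw [Ppow, ← Finset.Ico_add_one_right_eq_Icc, ← Finset.range_eq_Ico]
  have hup : d < p ^ (i + 1) := by
    calc d ≤ ∑ r ∈ Finset.range (i + 1), p ^ r := hPpow ▸ hle
      _ < p ^ (i + 1) := Nat.geomSum_lt hp (fun k hk => Finset.mem_range.1 hk)
  have hsm : s + m = i + 1 := by
    by_contra h
    have h2 : i + 1 ≤ s - 1 + m := by omega
    have h3 : p ^ (i + 1) ≤ p ^ (s - 1 + m) := Nat.pow_le_pow_right (by omega) h2
    have h4 : p ^ (s - 1 + m) ≤ f 0 := by simpa using hfm 0 (by omega)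
    omega
  -- find an index where l differs from the reference list
  have hjex : ∃ j, ∃ hj : j < s, f j ≠ p ^ (i - j) := by
    by_contra h
    push_neg at h
    apply hne
    apply List.ext_get (by simp [hs])
    intro n h1 h2
    rw [← hfget n h1, h n h1]
    simp
  obtain ⟨j, hj, hfj⟩ := hjex
  have hmlow : ∀ k, k < s → p ^ (i - k) ≤ f k := by
    intro k hk
    have := hfm k hk
    rwa [show s - 1 - k + m = i - k by omega] at this
  have hjlow : p ^ (i - j) + p ^ m ≤ f j := by
    have h1 := hmlow j hj
    have h2 : p ^ m ∣ f j - p ^ (i - j) :=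
      Nat.dvd_sub (hdvd j hj) (pow_dvd_pow p (show m ≤ i - j by omega))
    have h3 : p ^ m ≤ f j - p ^ (i - j) := Nat.le_of_dvd (by omega) h2
    omega
  have hsum2 : d = ∑ k ∈ Finset.range s, f k := by
    rw [← hsum]
    conv_lhs => rw [← List.ofFn_get l, List.sum_ofFn]
    rw [← Fin.sum_univ_eq_sum_range]
    exact Finset.sum_congr rfl fun k _ => (hfget k k.2).symm ▸ rfl
  have hjmem : j ∈ Finset.range s := Finset.mem_range.2 hj
  have hlow : ∑ k ∈ Finset.range s, p ^ (i - k) + p ^ m ≤ d := by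
    rw [hsum2, ← Finset.add_sum_erase _ f hjmem,
      ← Finset.add_sum_erase _ (fun k => p ^ (i - k)) hjmem]
    have e2 : ∑ k ∈ (Finset.range s).erase j, p ^ (i - k)
        ≤ ∑ k ∈ (Finset.range s).erase j, f k :=
      Finset.sum_le_sum fun k hk => hmlow k (Finset.mem_range.1 (Finset.mem_of_mem_erase hk))
    rw [add_right_comm]
    exact Nat.add_le_add hjlow e2
  have hre : ∑ k ∈ Finset.range s, p ^ (i - k) = ∑ k ∈ Finset.range s, p ^ (m + k) := by
    rw [← Finset.sum_range_reflect (fun k => p ^ (i - k)) s]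
    refine Finset.sum_congr rfl fun k hk => ?_
    have := Finset.mem_range.1 hk
    congr 1
    omega
  have hfin : ∑ r ∈ Finset.range (i + 1), p ^ r
      = ∑ r ∈ Finset.range m, p ^ r + ∑ k ∈ Finset.range s, p ^ (m + k) := by
    rw [show i + 1 = m + s by omega, Finset.sum_range_add]
  have hg : ∑ r ∈ Finset.range m, p ^ r < p ^ m :=
    Nat.geomSum_lt hp (fun k hk => Finset.mem_range.1 hk)
  have hfinal : d < d := by
    calc d ≤ ∑ r ∈ Finset.range m, p ^ r + ∑ k ∈ Finset.range s, p ^ (m + k) :=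
          hle.trans_eq (hPpow.trans hfin)
      _ < p ^ m + ∑ k ∈ Finset.range s, p ^ (m + k) := Nat.add_lt_add_right hg _
      _ ≤ d := by rw [add_comm]; exact hre ▸ hlow
  exact absurd hfinal (lt_irrefl d)
end

section
/- Let p ≥ 2 and let d be a positive integer with P_0^{i-1} ≤ d ≤ P_0^i. Then τ_p(d) = i + 1 if d = P_j^i for some j ≤ i (i.e., d is a sum of consecutive p-powers ending at p^i), and τ_p(d) = i otherwise. -/
/- ## Auxiliary lemmas -/

lemma padicValNat_pow_self' {p : ℕ} (hp : 2 ≤ p) (k : ℕ) : padicValNat p (p ^ k) = k := by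
  rw [padicValNat_def' (by omega) (pow_pos (by omega) k).ne']
  exact multiplicity_pow_self (by omega) (by simp [Nat.isUnit_iff]; omega) k

lemma mygeom_lt {p : ℕ} (hp : 2 ≤ p) (n : ℕ) : ∑ r ∈ Finset.range n, p ^ r < p ^ n := by
  induction n with
  | zero => simp
  | succ n ih =>
      rw [Finset.sum_range_succ, pow_succ]
      have : p ^ n * 2 ≤ p ^ n * p := Nat.mul_le_mul_left _ hp
      omega

lemma Ppow_self (p j : ℕ) : Ppow p j j = p ^ j := by simp [Ppow]

lemma Ppow_succ_top (p j k : ℕ) (h : j ≤ k + 1) :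
    Ppow p j (k + 1) = Ppow p j k + p ^ (k + 1) := by
  simpa [Ppow] using Finset.sum_Icc_succ_top h (fun r => p ^ r)

lemma Ppow_zero_eq_range (p i : ℕ) : Ppow p 0 i = ∑ r ∈ Finset.range (i + 1), p ^ r := by
  rw [Ppow]
  congr 1
  ext x
  simp [Nat.lt_succ_iff]

lemma Ppow_eq_range (p j i : ℕ) (h : j ≤ i) :
    Ppow p j i = ∑ r ∈ Finset.range (i - j + 1), p ^ (j + r) := by
  rw [Ppow, ← Finset.Ico_add_one_right_eq_Icc, Finset.sum_Ico_eq_sum_range,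
    show i + 1 - j = i - j + 1 by omega]

lemma Ppow_split (p v i : ℕ) (h : v ≤ i) :
    Ppow p 0 i = (∑ r ∈ Finset.range v, p ^ r) + Ppow p v i := by
  rw [Ppow_zero_eq_range, Finset.range_eq_Ico,
    ← Finset.sum_Ico_consecutive (fun r => p ^ r) (Nat.zero_le v) (show v ≤ i + 1 by omega),
    ← Finset.range_eq_Ico, Ppow, ← Finset.Ico_add_one_right_eq_Icc]

lemma pow_dvd_Ppow (p v i : ℕ) (h : v ≤ i) : p ^ v ∣ Ppow p v i :=
  Finset.dvd_sum fun r hr => pow_dvd_pow p (Finset.mem_Icc.mp hr).1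

lemma le_Ppow (p v k : ℕ) (h : v ≤ k) : p ^ k ≤ Ppow p v k :=
  Finset.single_le_sum (fun r _ => Nat.zero_le _) (Finset.mem_Icc.mpr ⟨h, le_refl _⟩)

/-- Key lower bound for admissible chains whose entries are divisible by `p^v`. -/
lemma key {p : ℕ} (hp : 2 ≤ p) (v : ℕ) :
    ∀ (t : List ℕ) (a : ℕ), (∀ x ∈ a :: t, 0 < x) →
      List.Chain' (fun x y => p * y ≤ x) (a :: t) →
      (∀ x ∈ a :: t, p ^ v ∣ x) →
      p ^ (v + t.length) ≤ a ∧ Ppow p v (v + t.length) ≤ (a :: t).sum := by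
  intro t
  induction t with
  | nil =>
      intro a hpos _ hdvd
      have : p ^ v ≤ a := Nat.le_of_dvd (hpos a (by simp)) (hdvd a (by simp))
      constructor
      · simpa using this
      · simpa [Ppow_self] using this
  | cons b t ih =>
      intro a hpos hchain hdvd
      have hab : p * b ≤ a := (List.isChain_cons_cons.mp hchain).1
      obtain ⟨hb, hsum⟩ := ih b (fun x hx => hpos x (by simp [hx]))
        (List.isChain_cons_cons.mp hchain).2 (fun x hx => hdvd x (by simp [hx]))
      have ha : p ^ (v + t.length + 1) ≤ a := by
        calc p ^ (v + t.length + 1) = p * p ^ (v + t.length) := by ring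
          _ ≤ p * b := Nat.mul_le_mul_left _ hb
          _ ≤ a := hab
      have hP : Ppow p v (v + t.length + 1) = Ppow p v (v + t.length) + p ^ (v + t.length + 1) :=
        Ppow_succ_top p v _ (by omega)
      have hlen : (b :: t).length = t.length + 1 := rfl
      constructor
      · rw [hlen, ← Nat.add_assoc]; exact ha
      · rw [hlen, ← Nat.add_assoc, hP]
        have hs : (a :: b :: t).sum = a + (b :: t).sum := rfl
        omega

/-- Upper bound: any element of the `tau` set is at most `i + 1`, and attaining `i + 1`
forces `d` to be a sum of consecutive `p`-powers ending at `p^i`. -/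
lemma upper {p i d : ℕ} (hp : 2 ≤ p) (h₂ : d ≤ Ppow p 0 i) {m : ℕ}
    (hm : ∃ l : List ℕ, Admissible p l ∧ l.sum = d ∧ m = partVal p l) :
    m ≤ i + 1 ∧ (m = i + 1 → ∃ j ≤ i, d = Ppow p j i) := by
  obtain ⟨l, ⟨hne, hpos, hchain⟩, hsum, hval⟩ := hm
  obtain ⟨a, t, rfl⟩ := List.exists_cons_of_ne_nil hne
  set v := sInf {v | ∃ x ∈ a :: t, padicValNat p x = v} with hv
  have hvle : ∀ x ∈ a :: t, v ≤ padicValNat p x := fun x hx =>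
    Nat.sInf_le ⟨x, hx, rfl⟩
  have hdvd : ∀ x ∈ a :: t, p ^ v ∣ x := fun x hx =>
    dvd_trans (pow_dvd_pow p (hvle x hx)) pow_padicValNat_dvd
  obtain ⟨-, hsum'⟩ := key hp v t a hpos hchain hdvd
  rw [hsum] at hsum'
  have hlow : p ^ (v + t.length) ≤ d :=
    le_trans (le_Ppow p v _ (by omega)) hsum'
  have hup : d < p ^ (i + 1) := by
    calc d ≤ Ppow p 0 i := h₂
      _ = ∑ r ∈ Finset.range (i + 1), p ^ r := Ppow_zero_eq_range p i
      _ < p ^ (i + 1) := mygeom_lt hp _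
  have hlt : v + t.length < i + 1 := by
    by_contra h
    push_neg at h
    have : p ^ (i + 1) ≤ p ^ (v + t.length) := Nat.pow_le_pow_right (by omega) h
    omega
  have hm_eq : m = v + t.length + 1 := by
    rw [hval]
    show (a :: t).length + v = v + t.length + 1
    simp [List.length_cons]
    omega
  refine ⟨by omega, fun hmi => ?_⟩
  have hvi : v + t.length = i := by omega
  refine ⟨v, by omega, ?_⟩
  rw [hvi] at hsum'
  have hdvd_d : p ^ v ∣ d := by
    rw [← hsum]; exact List.dvd_sum hdvd
  have hdvd_P : p ^ v ∣ Ppow p v i := pow_dvd_Ppow p v i (by omega)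
  have hsplit := Ppow_split p v i (by omega)
  have hgeo := mygeom_lt hp v
  have hdvd_diff : p ^ v ∣ d - Ppow p v i := Nat.dvd_sub hdvd_d hdvd_P
  have := Nat.eq_zero_of_dvd_of_lt hdvd_diff
  omega

/-- The descending list of `p`-powers `[p^(j+n-1), …, p^(j+1), p^j]`. -/
def pList (p j : ℕ) : ℕ → List ℕ
  | 0 => []
  | n + 1 => p ^ (j + n) :: pList p j n

lemma pList_length (p j n : ℕ) : (pList p j n).length = n := by
  induction n with
  | zero => rfl
  | succ n ih => simp [pList, ih]

lemma pList_sum (p j n : ℕ) : (pList p j n).sum = ∑ r ∈ Finset.range n, p ^ (j + r) := by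
  induction n with
  | zero => simp [pList]
  | succ n ih => rw [pList, List.sum_cons, ih, Finset.sum_range_succ]; omega

lemma pList_mem {p j n x : ℕ} (hx : x ∈ pList p j n) : ∃ r < n, x = p ^ (j + r) := by
  induction n with
  | zero => simp [pList] at hx
  | succ n ih =>
      simp only [pList, List.mem_cons] at hx
      rcases hx with rfl | hx
      · exact ⟨n, by omega, rfl⟩
      · obtain ⟨r, hr, rfl⟩ := ih hx
        exact ⟨r, by omega, rfl⟩

lemma pList_base_mem (p j n : ℕ) (hn : 0 < n) : p ^ j ∈ pList p j n := by
  induction n with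
  | zero => omega
  | succ n ih =>
      rcases Nat.eq_zero_or_pos n with rfl | hn'
      · simp [pList]
      · exact List.mem_cons_of_mem _ (ih hn')

lemma pList_chain'_cons {p : ℕ} (hp : 2 ≤ p) (j n a : ℕ) (ha : p ^ (j + n) ≤ a) :
    List.Chain' (fun x y => p * y ≤ x) (a :: pList p j n) := by
  induction n generalizing a with
  | zero => simp [pList, List.Chain']
  | succ n ih =>
      rw [pList]; refine List.isChain_cons_cons.mpr ?_
      constructor
      · calc p * p ^ (j + n) = p ^ (j + n + 1) := (pow_succ p (j + n)).symm ▸ (mul_comm _ _)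
          _ = p ^ (j + (n + 1)) := by ring
          _ ≤ a := ha
      · exact ih (p ^ (j + n)) (le_refl _)

lemma pList_chain' {p : ℕ} (hp : 2 ≤ p) (j n : ℕ) :
    List.Chain' (fun x y => p * y ≤ x) (pList p j n) := by
  cases n with
  | zero => simp [pList, List.Chain']
  | succ n => exact pList_chain'_cons hp j n _ (Nat.pow_le_pow_right (by omega) (by omega))

lemma pList_pos {p : ℕ} (hp : 2 ≤ p) (j n : ℕ) : ∀ x ∈ pList p j n, 0 < x := by
  intro x hx
  obtain ⟨r, -, rfl⟩ := pList_mem hx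
  exact pow_pos (by omega) _

/-- Membership of `partVal` of a particular partition in the `tau` set. -/
lemma partVal_of_Ppow {p i j : ℕ} (hp : 2 ≤ p) (hj : j ≤ i) :
    partVal p (pList p j (i - j + 1)) = i + 1 := by
  rw [partVal, pList_length]
  have hmem : j ∈ {v | ∃ x ∈ pList p j (i - j + 1), padicValNat p x = v} :=
    ⟨p ^ j, pList_base_mem p j _ (by omega), padicValNat_pow_self' hp j⟩
  have h1 : sInf {v | ∃ x ∈ pList p j (i - j + 1), padicValNat p x = v} = j := by
    refine le_antisymm (Nat.sInf_le hmem) ?_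
    obtain ⟨x, hx, hxv⟩ := Nat.sInf_mem ⟨j, hmem⟩
    obtain ⟨r, -, rfl⟩ := pList_mem hx
    rw [padicValNat_pow_self' hp] at hxv
    omega
  rw [h1]
  omega

theorem stmt_5 (p i d : ℕ) (hp : 2 ≤ p) (hi : 1 ≤ i) (hd : 0 < d)
    (h₁ : Ppow p 0 (i - 1) ≤ d) (h₂ : d ≤ Ppow p 0 i) :
    ((∃ j ≤ i, d = Ppow p j i) → tau p d = i + 1) ∧
      ((¬ ∃ j ≤ i, d = Ppow p j i) → tau p d = i) := by
  set S := {m | ∃ l : List ℕ, Admissible p l ∧ l.sum = d ∧ m = partVal p l} with hS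
  have hbdd : BddAbove S := ⟨i + 1, fun m hm => (upper hp h₂ hm).1⟩
  -- general lower-bound partition of length i
  have hd₁ : Ppow p 0 (i - 1) = (∑ r ∈ Finset.range (i - 1), p ^ r) + p ^ (i - 1) := by
    rw [Ppow_zero_eq_range]
    rw [show i - 1 + 1 = (i - 1) + 1 from rfl, Finset.sum_range_succ]
  set h : ℕ := d - ∑ r ∈ Finset.range (i - 1), p ^ r with hh
  have hsum_le : (∑ r ∈ Finset.range (i - 1), p ^ r) + p ^ (i - 1) ≤ d := by omega
  have hhead : p ^ (i - 1) ≤ h := by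
    have := Nat.pow_pos (n := i - 1) (show 0 < p by omega)
    omega
  set Lb : List ℕ := h :: pList p 0 (i - 1) with hLb
  have hLb_mem : partVal p Lb ∈ S := by
    refine ⟨Lb, ⟨by simp [hLb], ?_, ?_⟩, ?_, rfl⟩
    · intro x hx
      rw [hLb, List.mem_cons] at hx
      rcases hx with rfl | hx
      · have := Nat.pow_pos (n := i - 1) (show 0 < p by omega)
        omega
      · exact pList_pos hp 0 (i - 1) x hx
    · exact pList_chain'_cons hp 0 (i - 1) h (by simpa using hhead)
    · rw [hLb, List.sum_cons, pList_sum]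
      have hd1 : (∑ r ∈ Finset.range (i - 1), p ^ r) ≤ d := by omega
      simp only [Nat.zero_add]
      omega
  have hLb_ge : i ≤ partVal p Lb := by
    rw [partVal, hLb]
    have : (h :: pList p 0 (i - 1)).length = i := by
      rw [List.length_cons, pList_length]; omega
    rw [this]
    exact Nat.le_add_right _ _
  constructor
  · rintro ⟨j, hj, rfl⟩
    have hmem : (i + 1) ∈ S := by
      refine ⟨pList p j (i - j + 1), ⟨?_, pList_pos hp j _, pList_chain' hp j _⟩, ?_,
        (partVal_of_Ppow hp hj).symm⟩
      · have : i - j + 1 = (i - j) + 1 := rfl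
        rw [this, pList]
        simp
      · rw [pList_sum, Ppow_eq_range p j i hj]
    refine le_antisymm (csSup_le ⟨i + 1, hmem⟩ fun m hm => (upper hp h₂ hm).1) ?_
    exact le_csSup hbdd hmem
  · intro hno
    refine le_antisymm (csSup_le ⟨partVal p Lb, hLb_mem⟩ fun m hm => ?_) ?_
    · obtain ⟨h1, h2⟩ := upper hp h₂ hm
      rcases Nat.lt_or_ge m (i + 1) with h' | h'
      · omega
      · exact absurd (h2 (by omega)) hno
    · exact le_trans hLb_ge (le_csSup hbdd hLb_mem)
end

section
/- For every prime p and every positive integer d, τ_p(p·d) = τ_p(d) + 1. -/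
namespace TauAux

/-- The set over which the sup defining `tau` is taken. -/
def S (p d : ℕ) : Set ℕ :=
  {m | ∃ l : List ℕ, Admissible p l ∧ l.sum = d ∧ m = partVal p l}

lemma tau_eq (p d : ℕ) : tau p d = sSup (S p d) := rfl

lemma sum_map_mul (p : ℕ) (l : List ℕ) : (l.map (fun x => p * x)).sum = p * l.sum := by
  induction l with
  | nil => simp
  | cons a t ih => simp [ih, Nat.mul_add]

lemma length_le_sum {l : List ℕ} (h : ∀ x ∈ l, 0 < x) : l.length ≤ l.sum := by
  induction l with
  | nil => simp
  | cons a t ih =>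
    simp only [List.length_cons, List.sum_cons]
    have ha : 0 < a := h a (by simp)
    have := ih (fun x hx => h x (by simp [hx]))
    omega

lemma padicValNat_le_self (p x : ℕ) : padicValNat p x ≤ x :=
  (padicValNat_le_nat_log x).trans (Nat.log_le_self p x)

lemma S_bddAbove (p d : ℕ) : BddAbove (S p d) := by
  refine ⟨2 * d, fun m hm => ?_⟩
  obtain ⟨l, ⟨hne, hpos, _⟩, hsum, rfl⟩ := hm
  obtain ⟨x, hx⟩ := List.exists_mem_of_ne_nil l hne
  have h1 : l.length ≤ d := hsum ▸ length_le_sum hpos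
  have h2 : sInf {v | ∃ y ∈ l, padicValNat p y = v} ≤ d := by
    refine le_trans (Nat.sInf_le ⟨x, hx, rfl⟩) ?_
    refine le_trans (padicValNat_le_self p x) ?_
    exact hsum ▸ List.single_le_sum (fun y _ => Nat.zero_le y) x hx
  simp only [partVal]
  omega

lemma S_nonempty (p d : ℕ) (hd : 0 < d) : (S p d).Nonempty :=
  ⟨partVal p [d], [d], ⟨by simp, by simpa using hd, List.isChain_singleton d⟩,
    by simp, rfl⟩

lemma le_tau {p d : ℕ} {l : List ℕ} (hl : Admissible p l) (hs : l.sum = d) :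
    partVal p l ≤ tau p d :=
  le_csSup (S_bddAbove p d) ⟨l, hl, hs, rfl⟩

lemma sInf_shift {A : Set ℕ} (hA : A.Nonempty) :
    sInf {v | ∃ a ∈ A, a + 1 = v} = sInf A + 1 := by
  apply le_antisymm
  · exact Nat.sInf_le ⟨sInf A, Nat.sInf_mem hA, rfl⟩
  · obtain ⟨a, ha⟩ := hA
    refine le_csInf ⟨a + 1, a, ha, rfl⟩ ?_
    rintro v ⟨b, hb, rfl⟩
    exact Nat.add_le_add_right (Nat.sInf_le hb) 1

lemma partVal_map_mul {p : ℕ} (hp : p.Prime) {l : List ℕ} (hne : l ≠ [])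
    (hpos : ∀ x ∈ l, 0 < x) :
    partVal p (l.map (fun x => p * x)) = partVal p l + 1 := by
  haveI : Fact p.Prime := ⟨hp⟩
  have hset : {v | ∃ x ∈ l.map (fun x => p * x), padicValNat p x = v}
      = {v | ∃ a ∈ {v | ∃ x ∈ l, padicValNat p x = v}, a + 1 = v} := by
    ext v
    simp only [Set.mem_setOf_eq, List.mem_map]
    constructor
    · rintro ⟨_, ⟨x, hx, rfl⟩, rfl⟩
      refine ⟨padicValNat p x, ⟨x, hx, rfl⟩, ?_⟩
      rw [padicValNat.mul hp.ne_zero (hpos x hx).ne', padicValNat.self hp.one_lt]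
      omega
    · rintro ⟨_, ⟨x, hx, rfl⟩, rfl⟩
      refine ⟨p * x, ⟨x, hx, rfl⟩, ?_⟩
      rw [padicValNat.mul hp.ne_zero (hpos x hx).ne', padicValNat.self hp.one_lt]
      omega
  have hAne : {v | ∃ x ∈ l, padicValNat p x = v}.Nonempty := by
    obtain ⟨x, hx⟩ := List.exists_mem_of_ne_nil l hne
    exact ⟨padicValNat p x, x, hx, rfl⟩
  simp only [partVal, List.length_map, hset, sInf_shift hAne]
  omega

lemma admissible_map_mul {p : ℕ} (hp : p.Prime) {l : List ℕ} (hl : Admissible p l) :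
    Admissible p (l.map (fun x => p * x)) := by
  obtain ⟨hne, hpos, hchain⟩ := hl
  refine ⟨by simpa using hne, ?_, ?_⟩
  · intro y hy
    obtain ⟨x, hxl, rfl⟩ := List.mem_map.mp hy
    exact Nat.mul_pos hp.pos (hpos x hxl)
  · rw [List.Chain', List.isChain_map]
    exact hchain.imp (fun a b h => Nat.mul_le_mul_left p h)

lemma chain_div {p : ℕ} (hp : 0 < p) : ∀ (l : List ℕ), (∀ x ∈ l, p ∣ x) →
    List.Chain' (fun a b => p * b ≤ a) l →
    List.Chain' (fun a b => p * b ≤ a) (l.map (fun x => x / p)) := by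
  intro l
  induction l with
  | nil => simp
  | cons a t ih =>
    intro hdvd hchain
    rw [List.map_cons, List.Chain', List.isChain_cons]
    refine ⟨?_, ih (fun x hx => hdvd x (by simp [hx])) (List.isChain_cons.mp hchain).2⟩
    intro y hy
    rcases t with _ | ⟨b, t'⟩
    · simp at hy
    · simp only [List.map_cons, List.head?_cons, Option.mem_def, Option.some_inj] at hy
      subst hy
      have h1 : p * b ≤ a := (List.isChain_cons_cons.mp hchain).1
      have hb : p ∣ b := hdvd b (by simp)
      rw [Nat.mul_div_cancel' hb]
      exact (Nat.le_div_iff_mul_le hp).mpr (by rw [Nat.mul_comm]; exact h1)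

lemma chain_tail_sum {p : ℕ} (hp1 : 1 ≤ p) : ∀ (a : ℕ) (l : List ℕ),
    List.Chain' (fun a b => p * b ≤ a) (a :: l) → (p - 1) * l.sum ≤ a := by
  obtain ⟨q, rfl⟩ : ∃ q, p = q + 1 := ⟨p - 1, by omega⟩
  intro a l
  induction l generalizing a with
  | nil => simp
  | cons b t ih =>
    intro h
    have h1 : (q + 1) * b ≤ a := (List.isChain_cons_cons.mp h).1
    have h2 := ih b (List.isChain_cons_cons.mp h).2
    calc (q + 1 - 1) * (b :: t).sum = q * b + (q + 1 - 1) * t.sum := by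
          simp [Nat.mul_add]
      _ ≤ q * b + b := Nat.add_le_add_left h2 _
      _ = (q + 1) * b := by ring
      _ ≤ a := h1

end TauAux

open TauAux in
theorem stmt_6 (p d : ℕ) (hp : p.Prime) (hd : 0 < d) :
    tau p (p * d) = tau p d + 1 := by
  haveI : Fact p.Prime := ⟨hp⟩
  have hpd : 0 < p * d := Nat.mul_pos hp.pos hd
  apply le_antisymm
  · -- tau p (p * d) ≤ tau p d + 1
    rw [tau_eq]
    apply csSup_le (S_nonempty p (p * d) hpd)
    rintro m ⟨l, hadm, hsum, rfl⟩
    obtain ⟨hne, hpos, hchain⟩ := hadm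
    by_cases hdvd : ∀ x ∈ l, p ∣ x
    · -- divide everything by p
      set l' : List ℕ := l.map (fun x => x / p) with hl'
      have hrec : l = l'.map (fun x => p * x) := by
        rw [hl', List.map_map]
        conv_lhs => rw [← List.map_id l]
        apply List.map_congr_left
        intro x hx
        simp [Nat.mul_div_cancel' (hdvd x hx)]
      have hne' : l' ≠ [] := by simpa [hl'] using hne
      have hpos' : ∀ x ∈ l', 0 < x := by
        intro y hy
        obtain ⟨x, hxl, rfl⟩ := List.mem_map.mp hy
        exact Nat.div_pos (Nat.le_of_dvd (hpos x hxl) (hdvd x hxl)) hp.pos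
      have hadm' : Admissible p l' :=
        ⟨hne', hpos', chain_div hp.pos l hdvd hchain⟩
      have hsum' : l'.sum = d := by
        have : p * l'.sum = p * d := by
          rw [← hsum]
          conv_rhs => rw [hrec]
          rw [sum_map_mul]
        exact Nat.eq_of_mul_eq_mul_left hp.pos this
      have hval : partVal p l = partVal p l' + 1 := by
        conv_lhs => rw [hrec]
        exact partVal_map_mul hp hne' hpos'
      rw [hval]
      exact Nat.add_le_add_right (le_tau hadm' hsum') 1
    · -- some entry is not divisible by p
      push_neg at hdvd
      obtain ⟨x, hxl, hx⟩ := hdvd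
      have hv0 : sInf {v | ∃ y ∈ l, padicValNat p y = v} = 0 :=
        Nat.sInf_eq_zero.mpr (Or.inl ⟨x, hxl, padicValNat.eq_zero_of_not_dvd hx⟩)
      have hlen : partVal p l = l.length := by simp [partVal, hv0]
      rcases l with _ | ⟨d₁, rest⟩
      · exact absurd rfl hne
      rcases rest with _ | ⟨d₂, rest⟩
      · -- l = [d₁]; then d₁ = p * d is divisible by p, contradiction
        simp only [List.mem_singleton] at hxl
        subst hxl
        simp only [List.sum_cons, List.sum_nil, Nat.add_zero] at hsum
        exact absurd (hsum ▸ Dvd.intro d rfl) hx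
      · set T : ℕ := (d₂ :: rest).sum with hTdef
        have hT1 : (p - 1) * T ≤ d₁ := chain_tail_sum hp.one_lt.le d₁ (d₂ :: rest) hchain
        have hsum2 : d₁ + T = p * d := by
          simpa [hTdef] using hsum
        have hTd : T ≤ d := by
          have key : p * T ≤ p * d := by
            have e1 : T ≤ p * T := Nat.le_mul_of_pos_left T hp.pos
            have e2 : (p - 1) * T + T = p * T := by
              have hp1 : 1 ≤ p := hp.one_lt.le
              obtain ⟨q, rfl⟩ : ∃ q, p = q + 1 := ⟨p - 1, by omega⟩
              ring_nf
              simp [Nat.add_mul]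
            calc p * T = (p - 1) * T + T := e2.symm
              _ ≤ d₁ + T := Nat.add_le_add_right hT1 T
              _ = p * d := hsum2
          exact Nat.le_of_mul_le_mul_left key hp.pos
        set L : List ℕ := (d₂ + (d - T)) :: rest with hLdef
        have hLsum : L.sum = d := by
          have : T = d₂ + rest.sum := by simp [hTdef]
          simp only [hLdef, List.sum_cons]
          omega
        have hLadm : Admissible p L := by
          refine ⟨by simp [hLdef], ?_, ?_⟩
          · intro y hy
            rcases List.mem_cons.mp hy with rfl | hy
            · have : 0 < d₂ := hpos d₂ (by simp)
              omega
            · exact hpos y (by simp [hy])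
          · rw [hLdef, List.Chain', List.isChain_cons]
            have hc2 : List.Chain' (fun a b => p * b ≤ a) (d₂ :: rest) :=
              (List.isChain_cons_cons.mp hchain).2
            refine ⟨?_, (List.isChain_cons.mp hc2).2⟩
            intro y hy
            have := (List.isChain_cons.mp hc2).1 y hy
            omega
        have hLval : L.length ≤ partVal p L := Nat.le_add_right _ _
        have hLlen : L.length = 1 + rest.length := by
          simp only [hLdef, List.length_cons]
          omega
        rw [hlen]
        have : (d₁ :: d₂ :: rest).length = L.length + 1 := by
          simp only [hLdef, List.length_cons]
        rw [this]
        exact Nat.add_le_add_right (hLval.trans (le_tau hLadm hLsum)) 1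
  · -- tau p d + 1 ≤ tau p (p * d)
    have hmem : tau p d ∈ S p d := Nat.sSup_mem (S_nonempty p d hd) (S_bddAbove p d)
    obtain ⟨l, hadm, hsum, hval⟩ := hmem
    have h1 := partVal_map_mul hp hadm.1 hadm.2.1
    have h2 : (l.map (fun x => p * x)).sum = p * d := by
      rw [← hsum, sum_map_mul]
    calc tau p d + 1 = partVal p (l.map (fun x => p * x)) := by rw [h1, hval]
      _ ≤ tau p (p * d) := le_tau (admissible_map_mul hp hadm) h2
end

section
/- Let p ≥ 2 and suppose a positive integer d satisfies P_0^{i-1} ≤ d ≤ P_0^i. Then d is a sum of consecutive p-powers (i.e., d = P_j^i' for some j ≤ i') if and only if d = P_j^i for some j ≤ i; equivalently, a sum of consecutive p-powers lying in the interval [P_0^{i-1}, P_0^i] must end at exponent i, except for d = P_0^{i-1} itself. -/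
lemma Ppow_le_Ppow_zero (p j i : ℕ) : Ppow p j i ≤ Ppow p 0 i :=
  Finset.sum_le_sum_of_subset (Finset.Icc_subset_Icc_left (Nat.zero_le j))

lemma Ppow_zero_mono (p : ℕ) {a b : ℕ} (h : a ≤ b) : Ppow p 0 a ≤ Ppow p 0 b :=
  Finset.sum_le_sum_of_subset (Finset.Icc_subset_Icc_right h)

lemma pow_le_Ppow (p j i : ℕ) (h : j ≤ i) : p ^ i ≤ Ppow p j i :=
  Finset.single_le_sum (fun r _ => Nat.zero_le _) (Finset.mem_Icc.2 ⟨h, le_rfl⟩)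

lemma Ppow_zero_lt_pow (p i : ℕ) (hp : 2 ≤ p) : Ppow p 0 i < p ^ (i + 1) := by
  unfold Ppow
  rw [show Finset.Icc 0 i = Finset.range (i + 1) by
    ext x; simp [Nat.lt_succ_iff]]
  exact Nat.geomSum_lt hp (fun j hj => Finset.mem_range.1 hj)

theorem stmt_7 (p i d : ℕ) (hp : 2 ≤ p) (hi : 1 ≤ i) (hd : 0 < d)
    (h₁ : Ppow p 0 (i - 1) ≤ d) (h₂ : d ≤ Ppow p 0 i) :
    (∃ i' j, j ≤ i' ∧ d = Ppow p j i') ↔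
      (d = Ppow p 0 (i - 1) ∨ ∃ j ≤ i, d = Ppow p j i) := by
  constructor
  · rintro ⟨i', j, hji, rfl⟩
    rcases lt_trichotomy i' i with h | rfl | h
    · left
      have h1 : Ppow p j i' ≤ Ppow p 0 (i - 1) :=
        (Ppow_le_Ppow_zero p j i').trans (Ppow_zero_mono p (by omega))
      omega
    · exact Or.inr ⟨j, hji, rfl⟩
    · exfalso
      have h1 : p ^ i' ≤ Ppow p j i' := pow_le_Ppow p j i' hji
      have h2 : Ppow p 0 i < p ^ (i + 1) := Ppow_zero_lt_pow p i hp
      have h3 : p ^ (i + 1) ≤ p ^ i' := Nat.pow_le_pow_right (by omega) (by omega)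
      omega
  · rintro (rfl | ⟨j, hji, rfl⟩)
    · exact ⟨i - 1, 0, Nat.zero_le _, rfl⟩
    · exact ⟨i, j, hji, rfl⟩
end

section
/- Let k be an algebraically closed field of characteristic 2 and let t be transcendental over k. There do not exist nonzero polynomials f, g, F, G ∈ k[t] with gcd(f,g) = 1 and gcd(F,G) = 1 such that F^4·g^2 = G^4·f·(g + t·f). -/
open Polynomial

private lemma sqrt_of_deriv_zero {k : Type*} [Field k] [IsAlgClosed k] [CharP k 2]
    (p : k[X]) (hp : derivative p = 0) : ∃ q : k[X], q ^ 2 = p := by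
  haveI : ExpChar k 2 := .prime Nat.prime_two
  refine ⟨(contract 2 p).map ((frobeniusEquiv k 2).symm : k →+* k), ?_⟩
  have h1 : map (frobenius k 2) ((contract 2 p).map ((frobeniusEquiv k 2).symm : k →+* k))
      = contract 2 p := by
    rw [map_map]
    have : (frobenius k 2).comp ((frobeniusEquiv k 2).symm : k →+* k) = RingHom.id k := by
      ext x
      simp [RingHom.comp_apply]
    rw [this, map_id]
  rw [← map_frobenius_expand 2, map_expand, h1, expand_contract 2 hp two_ne_zero]

private lemma deriv_zero_of_dvd {k : Type*} [Field k] {p : k[X]}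
    (h : p ∣ derivative p) : derivative p = 0 := by
  by_contra hne
  have h1 := Polynomial.natDegree_le_of_dvd h hne
  have h0 : p.natDegree ≠ 0 := by
    intro h0
    exact hne (derivative_of_natDegree_zero h0)
  exact absurd (natDegree_derivative_lt h0) (not_lt.mpr h1)

theorem stmt_13 (k : Type*) [Field k] [IsAlgClosed k] [CharP k 2] :
    ¬ ∃ f g F G : k[X], f ≠ 0 ∧ g ≠ 0 ∧ F ≠ 0 ∧ G ≠ 0 ∧
      IsCoprime f g ∧ IsCoprime F G ∧
      F ^ 4 * g ^ 2 = G ^ 4 * f * (g + X * f) := by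
  rintro ⟨f, g, F, G, hf, hg, hF, hG, hfg, hFG, heq⟩
  have twoX : (2 : k[X]) = 0 := by
    have := CharP.cast_eq_zero k[X] 2
    exact_mod_cast this
  -- derivative of any square is zero
  have hds : ∀ p : k[X], derivative (p ^ 2) = 0 := by
    intro p
    rw [derivative_sq]
    have : (C (2 : k)) = 0 := by
      rw [map_ofNat (C : k →+* k[X]) 2, twoX]
    rw [this, zero_mul, zero_mul]
  have hd4 : derivative (G ^ 4) = 0 := by
    have e : G ^ 4 = (G ^ 2) ^ 2 := by ring
    rw [e, hds]
  -- differentiate the main equation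
  have hd0 : derivative (G ^ 4 * (f * g + X * f ^ 2)) = 0 := by
    have e : G ^ 4 * (f * g + X * f ^ 2) = G ^ 4 * f * (g + X * f) := by ring
    rw [e, ← heq]
    have e2 : F ^ 4 * g ^ 2 = (F ^ 2 * g) ^ 2 := by ring
    rw [e2, hds]
  rw [derivative_mul, hd4, zero_mul, zero_add] at hd0
  have hd1 : derivative (f * g + X * f ^ 2) = derivative f * g + f * derivative g + f ^ 2 := by
    rw [derivative_add, derivative_mul, derivative_mul, derivative_X, hds]
    ring
  rw [hd1] at hd0
  have key : derivative f * g + f * derivative g + f ^ 2 = 0 := by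
    rcases mul_eq_zero.mp hd0 with h | h
    · exact absurd h (pow_ne_zero 4 hG)
    · exact h
  -- f ∣ derivative f, hence derivative f = 0
  have hfd : f ∣ derivative f := by
    apply hfg.dvd_of_dvd_mul_right
    exact ⟨derivative g + f, by linear_combination key - (f * derivative g + f ^ 2) * twoX⟩
  have hf' : derivative f = 0 := deriv_zero_of_dvd hfd
  -- derivative g = f
  have hgf : derivative g = f := by
    have h0 : f * (derivative g + f) = 0 := by
      linear_combination key - g * hf'
    rcases mul_eq_zero.mp h0 with h | h
    · exact absurd h hf
    · linear_combination h - f * twoX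
  -- square roots
  obtain ⟨h, hfh⟩ := sqrt_of_deriv_zero f hf'
  have hgXf' : derivative (g + X * f) = 0 := by
    rw [derivative_add, derivative_mul, derivative_X, hgf, hf']
    linear_combination f * twoX
  obtain ⟨s, hs⟩ := sqrt_of_deriv_zero (g + X * f) hgXf'
  have hh0 : h ≠ 0 := by
    intro h0
    apply hf
    rw [← hfh, h0]; ring
  have hs0 : s ≠ 0 := by
    intro h0
    rw [h0] at hs
    have : F ^ 4 * g ^ 2 = 0 := by
      rw [heq, ← hs]; ring
    exact (mul_ne_zero (pow_ne_zero 4 hF) (pow_ne_zero 2 hg)) this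
  -- take square root of the main equation
  have hsq : (F ^ 2 * g) ^ 2 = (G ^ 2 * h * s) ^ 2 := by
    linear_combination heq - G ^ 4 * s ^ 2 * hfh - G ^ 4 * f * hs
  have h5 : F ^ 2 * g = G ^ 2 * h * s := by
    have hz : (F ^ 2 * g - G ^ 2 * h * s) ^ 2 = 0 := by
      linear_combination hsq + (G ^ 2 * h * s * (G ^ 2 * h * s) - F ^ 2 * g * (G ^ 2 * h * s)) * twoX
    have := pow_eq_zero_iff (n := 2) (by norm_num) |>.mp hz
    exact sub_eq_zero.mp this
  -- differentiate h5
  have h6 : F ^ 2 * f = G ^ 2 * (derivative h * s + h * derivative s) := by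
    have hd := congrArg derivative h5
    rw [derivative_mul, derivative_mul, derivative_mul, hds, hds, hgf] at hd
    linear_combination hd
  -- key polynomial identity
  have hg2 : g = s ^ 2 + X * h ^ 2 := by
    linear_combination -hs - X * hfh - X * f * twoX
  have hG2 : (G : k[X]) ^ 2 ≠ 0 := pow_ne_zero 2 hG
  have h7 : h ^ 3 * s = (s ^ 2 + X * h ^ 2) * (derivative h * s + h * derivative s) := by
    have e1 : G ^ 2 * (h ^ 3 * s) =
        G ^ 2 * ((s ^ 2 + X * h ^ 2) * (derivative h * s + h * derivative s)) := by
      calc G ^ 2 * (h ^ 3 * s) = (G ^ 2 * h * s) * h ^ 2 := by ring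
      _ = (F ^ 2 * g) * h ^ 2 := by rw [h5]
      _ = (F ^ 2 * f) * g := by rw [← hfh]; ring
      _ = (G ^ 2 * (derivative h * s + h * derivative s)) * g := by rw [h6]
      _ = G ^ 2 * ((s ^ 2 + X * h ^ 2) * (derivative h * s + h * derivative s)) := by
          rw [hg2]; ring
    exact mul_left_cancel₀ hG2 e1
  -- coprimality of h and s
  have hcs : IsCoprime h s := by
    have ch1 : IsCoprime h g := by
      have : IsCoprime (h ^ 2) g := by rw [hfh]; exact hfg
      exact (IsCoprime.pow_left_iff two_pos).mp this
    have ch2 : IsCoprime h (s ^ 2) := by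
      rw [hs, ← hfh]
      have h3 := ch1.add_mul_left_right (X * h)
      have e : g + h * (X * h) = g + X * h ^ 2 := by ring
      rwa [e] at h3
    exact (IsCoprime.pow_right_iff two_pos).mp ch2
  -- derivative h = 0
  have hh' : derivative h = 0 := by
    apply deriv_zero_of_dvd
    apply (hcs.pow_right (n := 3)).dvd_of_dvd_mul_right
    refine ⟨h ^ 2 * s + s ^ 2 * derivative s + X * h * derivative h * s
      + X * h ^ 2 * derivative s, ?_⟩
    linear_combination -h7 - (h * s ^ 2 * derivative s + X * h ^ 2 * derivative h * s
      + X * h ^ 3 * derivative s) * twoX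
  rw [hh', zero_mul, zero_add] at h7
  have h8 : h ^ 2 * s = (s ^ 2 + X * h ^ 2) * derivative s :=
    mul_left_cancel₀ hh0 (by linear_combination h7)
  -- second derivative of s vanishes
  have hss : derivative (derivative s) = 0 := by
    have hd := congrArg derivative h8
    rw [derivative_mul, derivative_mul, hds, derivative_add, derivative_mul, hds,
      derivative_X, hds] at hd
    have h0 : (s ^ 2 + X * h ^ 2) * derivative (derivative s) = 0 := by
      linear_combination -hd
    rcases mul_eq_zero.mp h0 with h1 | h1
    · rw [← hg2] at h1; exact absurd h1 hg
    · exact h1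
  have hsd0 : derivative s ≠ 0 := by
    intro h0
    rw [h0, mul_zero] at h8
    exact (mul_ne_zero (pow_ne_zero 2 hh0) hs0) h8
  -- s divides X * derivative s
  have hdvd2 : s ∣ X * derivative s := by
    apply (hcs.symm.pow_right (n := 2)).dvd_of_dvd_mul_right
    refine ⟨h ^ 2 + s * derivative s, ?_⟩
    linear_combination -h8 - s ^ 2 * derivative s * twoX
  obtain ⟨m, hm⟩ := hdvd2
  have hXs0 : X * derivative s ≠ 0 := mul_ne_zero X_ne_zero hsd0
  have hm0 : m ≠ 0 := by
    intro h0
    rw [h0, mul_zero] at hm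
    exact hXs0 hm
  -- degree of m is zero
  have hsdeg : s.natDegree ≠ 0 := by
    intro h0
    exact hsd0 (derivative_of_natDegree_zero h0)
  have hmdeg : m.natDegree = 0 := by
    have e1 : (X * derivative s).natDegree = 1 + (derivative s).natDegree := by
      rw [natDegree_mul X_ne_zero hsd0, natDegree_X]
    have e2 : (s * m).natDegree = s.natDegree + m.natDegree :=
      natDegree_mul hs0 hm0
    have e3 : (derivative s).natDegree < s.natDegree := natDegree_derivative_lt hsdeg
    rw [hm, e2] at e1
    omega
  have hm' : derivative m = 0 := derivative_of_natDegree_zero hmdeg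
  -- m = 1
  have hm1 : m = 1 := by
    have hd := congrArg derivative hm
    rw [derivative_mul, derivative_X, derivative_mul, hss, hm'] at hd
    have h0 : derivative s * (m - 1) = 0 := by
      linear_combination -hd
    rcases mul_eq_zero.mp h0 with h1 | h1
    · exact absurd h1 hsd0
    · exact sub_eq_zero.mp h1
  rw [hm1, mul_one] at hm
  -- final contradiction
  have hfinal : s ^ 2 * derivative s = 0 := by
    linear_combination -h8 - h ^ 2 * hm
  rcases mul_eq_zero.mp hfinal with h1 | h1
  · exact (pow_ne_zero 2 hs0) h1
  · exact hsd0 h1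
end

section
/- Let k be an algebraically closed field of characteristic 2 and let f, g, F, G ∈ k[t] be nonzero polynomials with gcd(f,g) = 1 satisfying F^4·g^2 = G^4·f·(g + t·f) and gcd(F,G) = 1. Then G^4 divides g^2, the polynomial f is a fourth power in k[t], and one can write g = G^2·g', f = f'^4, F = f'·F' for some polynomials f', g', F' ∈ k[t]. -/
open Polynomial

theorem stmt_14 (k : Type*) [Field k] [IsAlgClosed k] [CharP k 2]
    (f g F G : k[X]) (hf : f ≠ 0) (hg : g ≠ 0) (hF : F ≠ 0) (hG : G ≠ 0)
    (hfg : IsCoprime f g) (hFG : IsCoprime F G)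
    (heq : F ^ 4 * g ^ 2 = G ^ 4 * f * (g + X * f)) :
    G ^ 4 ∣ g ^ 2 ∧ (∃ h : k[X], f = h ^ 4) ∧
      ∃ f' g' F' : k[X], g = G ^ 2 * g' ∧ f = f' ^ 4 ∧ F = f' * F' := by
  -- f is coprime to g + X * f
  have h2 : IsCoprime f (g + X * f) := by
    obtain ⟨a, b, hab⟩ := hfg
    exact ⟨a - b * X, b, by rw [← hab]; ring⟩
  -- part 1 : G ^ 4 ∣ g ^ 2
  have hG4g2 : G ^ 4 ∣ g ^ 2 := by
    have h : G ^ 4 ∣ g ^ 2 * F ^ 4 := ⟨f * (g + X * f), by rw [mul_comm, heq]; ring⟩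
    exact (hFG.symm.pow).dvd_of_dvd_mul_right h
  -- f divides F ^ 4
  have hfF4 : f ∣ F ^ 4 := by
    have h : f ∣ F ^ 4 * g ^ 2 := ⟨G ^ 4 * (g + X * f), by rw [heq]; ring⟩
    exact (hfg.pow_right).dvd_of_dvd_mul_right h
  obtain ⟨u, hu⟩ := hfF4
  have hcancel : u * g ^ 2 = G ^ 4 * (g + X * f) := by
    apply mul_left_cancel₀ hf
    calc f * (u * g ^ 2) = F ^ 4 * g ^ 2 := by rw [hu]; ring
      _ = G ^ 4 * f * (g + X * f) := heq
      _ = f * (G ^ 4 * (g + X * f)) := by ring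
  -- f and u are coprime
  have hgcd : IsCoprime f u := by
    apply isCoprime_of_dvd f u (fun h => hf h.1)
    intro z hz hz0 hzf hzu
    have hdF : z ∣ F ^ 4 := hzf.trans ⟨u, hu⟩
    have hdG : z ∣ G ^ 4 := by
      have h1 : z ∣ G ^ 4 * (g + X * f) := hzu.trans ⟨g ^ 2, hcancel.symm⟩
      have hcop : IsCoprime z (g + X * f) := h2.of_isCoprime_of_dvd_left hzf
      exact hcop.dvd_of_dvd_mul_right h1
    exact hz ((hFG.pow).isUnit_of_dvd' hdF hdG)
  obtain ⟨d, hd⟩ := exists_associated_pow_of_mul_eq_pow' hgcd hu.symm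
  obtain ⟨c, hc⟩ := hd
  -- the unit c is a fourth power
  obtain ⟨r, hr, hrc⟩ := Polynomial.isUnit_iff.mp c.isUnit
  obtain ⟨e, he⟩ := IsAlgClosed.exists_pow_nat_eq r (n := 4) (by norm_num)
  have hf4 : f = (d * C e) ^ 4 := by
    rw [← hc, ← hrc, ← he, mul_pow, map_pow]
  -- f' ∣ F
  have hf'F : d * C e ∣ F := by
    rw [← IsIntegrallyClosed.pow_dvd_pow_iff (n := 4) (by norm_num : 4 ≠ 0), ← hf4]
    exact ⟨u, hu⟩
  obtain ⟨F', hF'⟩ := hf'F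
  -- G ^ 2 ∣ g
  have hG2g : G ^ 2 ∣ g := by
    rw [← IsIntegrallyClosed.pow_dvd_pow_iff (n := 2) (by norm_num : 2 ≠ 0), ← pow_mul]
    exact hG4g2
  obtain ⟨g', hg'⟩ := hG2g
  exact ⟨hG4g2, ⟨d * C e, hf4⟩, d * C e, g', F', hg', hf4, hF'⟩
end
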